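/- arXiv:1402.6577 — 2 statements merged into one kernel-verified Lean document; each statement's English description precedes it below -/
import Mathlib

section
/- The series ∑_{k=1}^∞ (-1)^k · (ln(k) + γ)/k converges and equals -(1/2)(ln 2)², where γ is the Euler–Mascheroni constant. -/
/-!
Pairing consecutive terms, the partial sum up to `2N` equals
`log 2 · H_N - ∑_{N < k ≤ 2N} (log k + γ) / k`, where `H_N` is the `N`-th harmonic number.
Comparing with the integrals of the antitone functions `1 / x` and `log x / x` over `[N, 2N]`,
the second sum is `(log 2)² / 2 + log 2 · log N + γ log 2 + o(1)`, while `H_N = log N + γ + o(1)`,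
so the even partial sums tend to `-(log 2)² / 2`. The terms tend to zero, so the odd partial sums
have the same limit.
-/

open Real Filter Finset Topology

theorem sum_range_two_mul_neg_one_pow_mul {R : Type*} [Ring R] (g : ℕ → R) (N : ℕ) :
    ∑ k ∈ range (2 * N), (-1) ^ k * g k
      = ∑ k ∈ range (2 * N), g k - 2 * ∑ m ∈ range N, g (2 * m + 1) := by
  induction N with
  | zero => simp
  | succ N ih =>
    rw [Nat.mul_succ, sum_range_succ, sum_range_succ, sum_range_succ, sum_range_succ,
      sum_range_succ, ih, pow_succ, pow_mul]
    simp only [neg_one_sq, one_pow, one_mul, neg_mul]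
    noncomm_ring

theorem tendsto_of_tendsto_comp_two_mul {G : Type*} [AddCommGroup G] [TopologicalSpace G]
    [IsTopologicalAddGroup G] {u : ℕ → G} {l : G}
    (heven : Tendsto (fun n ↦ u (2 * n)) atTop (𝓝 l))
    (hstep : Tendsto (fun n ↦ u (n + 1) - u n) atTop (𝓝 0)) :
    Tendsto u atTop (𝓝 l) := by
  have hodd : Tendsto (fun n ↦ u (2 * n + 1)) atTop (𝓝 l) := by
    simpa using heven.add (hstep.comp (tendsto_id.const_mul_atTop' two_pos))
  intro s hs
  obtain ⟨N₁, h₁⟩ := eventually_atTop.1 (heven hs)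
  obtain ⟨N₂, h₂⟩ := eventually_atTop.1 (hodd hs)
  refine eventually_atTop.2 ⟨2 * (N₁ + N₂), fun n hn ↦ ?_⟩
  obtain ⟨k, rfl | rfl⟩ := Nat.even_or_odd' n
  · exact h₁ k (by omega)
  · exact h₂ k (by omega)

theorem tendsto_sum_Ico_two_mul_sub_integral {f F : ℝ → ℝ} {a : ℝ}
    (hanti : AntitoneOn f (Set.Ici a)) (hF : ∀ x ∈ Set.Ici a, HasDerivAt F (f x) x)
    (hf : Tendsto f atTop (𝓝 0)) :
    Tendsto (fun N : ℕ ↦ ∑ k ∈ Ico N (2 * N), f ↑(k + 1) - (F ↑(2 * N) - F N)) atTop (𝓝 0) := by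
  have bounds : ∀ N : ℕ, a ≤ N →
      f ↑(2 * N) - f N ≤ ∑ k ∈ Ico N (2 * N), f ↑(k + 1) - (F ↑(2 * N) - F N) ∧
      ∑ k ∈ Ico N (2 * N), f ↑(k + 1) - (F ↑(2 * N) - F N) ≤ 0 := by
    intro N hN
    have hle : N ≤ 2 * N := by omega
    have hanti' : AntitoneOn f (Set.Icc (N : ℝ) ↑(2 * N)) :=
      hanti.mono fun x hx ↦ hN.trans hx.1
    have hsub : Set.uIcc (N : ℝ) ↑(2 * N) ⊆ Set.Ici a := by
      rw [Set.uIcc_of_le (by exact_mod_cast hle)]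
      exact fun x hx ↦ hN.trans hx.1
    have hint : ∫ x in (N : ℝ)..↑(2 * N), f x = F ↑(2 * N) - F N :=
      intervalIntegral.integral_eq_sub_of_hasDerivAt (fun x hx ↦ hF x (hsub hx))
        (hanti.mono hsub).intervalIntegrable
    have hupper := hanti'.sum_le_integral_Ico hle
    have hlower := hanti'.integral_le_sum_Ico hle
    have hshift : ∑ k ∈ Ico N (2 * N), f ↑(k + 1) - ∑ k ∈ Ico N (2 * N), f k
        = f ↑(2 * N) - f N := by
      rw [← sum_sub_distrib]
      exact sum_Ico_sub (fun k : ℕ ↦ f k) hle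
    constructor <;> linarith
  have hlow : Tendsto (fun N : ℕ ↦ f ↑(2 * N) - f N) atTop (𝓝 0) := by
    simpa using (hf.comp (tendsto_natCast_atTop_atTop.comp
      (tendsto_id.const_mul_atTop' two_pos))).sub (hf.comp tendsto_natCast_atTop_atTop)
  refine tendsto_of_tendsto_of_tendsto_of_le_of_le' hlow tendsto_const_nhds ?_ ?_ <;>
  filter_upwards [tendsto_natCast_atTop_atTop.eventually_ge_atTop a] with N hN
  exacts [(bounds N hN).1, (bounds N hN).2]

theorem log_natCast_two_mul {n : ℕ} (hn : n ≠ 0) : log ((2 * n : ℕ) : ℝ) = log 2 + log n := by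
  push_cast
  exact log_mul two_ne_zero (by positivity)

theorem tendsto_sum_Ico_two_mul_inv :
    Tendsto (fun N : ℕ ↦ ∑ k ∈ Ico N (2 * N), ((k + 1 : ℕ) : ℝ)⁻¹) atTop (𝓝 (log 2)) := by
  have h := tendsto_sum_Ico_two_mul_sub_integral (F := log) (a := 1)
    (fun x hx _ _ hxy ↦ inv_anti₀ (zero_lt_one.trans_le hx) hxy)
    (fun x hx ↦ hasDerivAt_log (zero_lt_one.trans_le hx).ne') tendsto_inv_atTop_zero
  rw [← zero_add (log 2)]
  refine (h.add_const (log 2)).congr' ?_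
  filter_upwards [eventually_ge_atTop 1] with N hN
  rw [log_natCast_two_mul (by omega)]
  ring

theorem tendsto_sum_Ico_two_mul_log_div_self_sub :
    Tendsto (fun N : ℕ ↦ ∑ k ∈ Ico N (2 * N), log ((k + 1 : ℕ) : ℝ) / ((k + 1 : ℕ) : ℝ)
      - log 2 * log N) atTop (𝓝 (log 2 ^ 2 / 2)) := by
  have hF : ∀ x ∈ Set.Ici (exp 1), HasDerivAt (fun x ↦ log x ^ 2 / 2) (log x / x) x := by
    intro x hx
    exact (((hasDerivAt_log (exp_pos 1 |>.trans_le hx).ne').fun_pow 2).div_const 2).congr_deriv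
      (by norm_num; ring)
  have h := tendsto_sum_Ico_two_mul_sub_integral log_div_self_antitoneOn hF
    isLittleO_log_id_atTop.tendsto_div_nhds_zero
  rw [← zero_add (log 2 ^ 2 / 2)]
  refine (h.add_const (log 2 ^ 2 / 2)).congr' ?_
  filter_upwards [eventually_ge_atTop 1] with N hN
  simp only [log_natCast_two_mul (by omega : N ≠ 0)]
  ring

theorem sum_range_two_mul_neg_one_pow_mul_log_add_div (c : ℝ) (N : ℕ) :
    ∑ k ∈ range (2 * N), (-1 : ℝ) ^ (k + 1) * (log ((k + 1 : ℕ) : ℝ) + c) / ((k + 1 : ℕ) : ℝ)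
      = log 2 * harmonic N
        - ∑ k ∈ Ico N (2 * N), (log ((k + 1 : ℕ) : ℝ) + c) / ((k + 1 : ℕ) : ℝ) := by
  set g : ℕ → ℝ := fun k ↦ (log ((k + 1 : ℕ) : ℝ) + c) / ((k + 1 : ℕ) : ℝ)
  have hpair : ∀ m : ℕ, 2 * g (2 * m + 1) = log 2 * ((m + 1 : ℕ) : ℝ)⁻¹ + g m := by
    intro m
    have hlog : log ((2 * m + 1 + 1 : ℕ) : ℝ) = log 2 + log ((m + 1 : ℕ) : ℝ) := by
      rw [← log_natCast_two_mul m.succ_ne_zero, Nat.mul_succ]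
    simp only [g, hlog]
    field_simp
    push_cast
    ring
  have hharm : (harmonic N : ℝ) = ∑ m ∈ range N, ((m + 1 : ℕ) : ℝ)⁻¹ := by
    simp [harmonic]
  calc ∑ k ∈ range (2 * N), (-1 : ℝ) ^ (k + 1) * (log ((k + 1 : ℕ) : ℝ) + c) / ((k + 1 : ℕ) : ℝ)
      = -∑ k ∈ range (2 * N), (-1 : ℝ) ^ k * g k := by
        rw [← sum_neg_distrib]
        refine sum_congr rfl fun k _ ↦ ?_
        simp only [g, pow_succ]
        ring
    _ = ∑ m ∈ range N, 2 * g (2 * m + 1) - ∑ k ∈ range N, g k - ∑ k ∈ Ico N (2 * N), g k := by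
        rw [sum_range_two_mul_neg_one_pow_mul, ← sum_range_add_sum_Ico g (by omega : N ≤ 2 * N),
          mul_sum]
        ring
    _ = log 2 * harmonic N - ∑ k ∈ Ico N (2 * N), g k := by
        simp only [hpair, sum_add_distrib, ← mul_sum, hharm]
        ring

theorem tendsto_log_add_div_self_atTop (c : ℝ) :
    Tendsto (fun x : ℝ ↦ (log x + c) / x) atTop (𝓝 0) := by
  have h := isLittleO_log_id_atTop.tendsto_div_nhds_zero.add (tendsto_inv_atTop_zero.const_mul c)
  rw [mul_zero, add_zero] at h
  exact h.congr fun x ↦ by simp only [id]; ring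

/-- The series `∑_{k=1}^∞ (-1)^k (ln k + γ)/k` converges to `-(1/2)(ln 2)²`,
where `γ` is the Euler–Mascheroni constant. -/
theorem alt_log_add_gamma_div_self_sum :
    Tendsto (fun N => ∑ k ∈ Finset.range N,
        (-1 : ℝ) ^ (k + 1) *
          (Real.log ((k + 1 : ℕ) : ℝ) + Real.eulerMascheroniConstant) / ((k + 1 : ℕ) : ℝ))
      atTop (nhds (-(1 / 2) * (Real.log 2) ^ 2)) := by
  refine tendsto_of_tendsto_comp_two_mul ?_ ?_
  · have hsplit : ∀ N : ℕ, ∑ k ∈ Ico N (2 * N),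
          (log ((k + 1 : ℕ) : ℝ) + eulerMascheroniConstant) / ((k + 1 : ℕ) : ℝ)
        = ∑ k ∈ Ico N (2 * N), log ((k + 1 : ℕ) : ℝ) / ((k + 1 : ℕ) : ℝ)
          + eulerMascheroniConstant * ∑ k ∈ Ico N (2 * N), ((k + 1 : ℕ) : ℝ)⁻¹ := by
      intro N
      rw [mul_sum, ← sum_add_distrib]
      exact sum_congr rfl fun k _ ↦ by ring
    have h := ((tendsto_harmonic_sub_log.const_mul (log 2)).sub
      tendsto_sum_Ico_two_mul_log_div_self_sub).sub
      (tendsto_sum_Ico_two_mul_inv.const_mul eulerMascheroniConstant)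
    convert h using 2 with N
    · rw [sum_range_two_mul_neg_one_pow_mul_log_add_div, hsplit]
      ring
    · ring
  · simp_rw [sum_range_succ_sub_sum, mul_div_assoc]
    rw [tendsto_zero_iff_norm_tendsto_zero]
    simp only [norm_mul, norm_pow, norm_neg, norm_one, one_pow, one_mul]
    simpa using ((tendsto_log_add_div_self_atTop eulerMascheroniConstant).comp
      (tendsto_natCast_atTop_atTop.comp (tendsto_add_atTop_nat 1))).norm
end

section
/- The infinite product ∏_{n=1}^∞ [ (2n)^{1/(2n)} · (2n)^{1/(2n)} / ( (2n-1)^{1/(2n-1)} · (2n+1)^{1/(2n+1)} ) ] converges and equals 2^{2γ - ln 2}, where γ is the Euler–Mascheroni constant. -/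
open Real Filter Finset

/-!
With `f k = log k / k` the `n`-th factor is `exp (2 f(2n+2) - f(2n+1) - f(2n+3))`, so the logarithm
of the `N`-th partial product is `2 ∑_{k ≤ 2N} (-1)^k f(k) - f(2N+1)`, twice a partial sum of the
series for `η'(1)`. Since `2 f(2k) = log 2 / k + f(k)`, that alternating sum equals
`log 2 · H_N - ∑_{N < k ≤ 2N} f(k)`, and comparing the last sum with
`∫_N^{2N} log x / x dx = log 2 · log N + (log 2)^2 / 2` gives the limit `γ log 2 - (log 2)^2 / 2`.
-/

lemma rpow_one_div_self_eq_exp {x : ℝ} (hx : 0 < x) : x ^ (1 / x) = exp (log x / x) := by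
  rw [rpow_def_of_pos hx, mul_one_div]

lemma sum_range_two_mul_sub_neighbours {R : Type*} [CommRing R] (a : ℕ → R) (N : ℕ) :
    ∑ n ∈ range N, (2 * a (2 * n + 2) - a (2 * n + 1) - a (2 * n + 3)) =
      4 * ∑ k ∈ range N, a (2 * k + 2) - 2 * ∑ k ∈ range (2 * N), a (k + 1)
        + a 1 - a (2 * N + 1) := by
  induction N with
  | zero => simp
  | succ N ih =>
    rw [mul_add_one, sum_range_succ, ih, sum_range_succ, sum_range_succ, sum_range_succ]
    ring

noncomputable def logDivSelf (k : ℕ) : ℝ := log k / k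

lemma logDivSelf_one : logDivSelf 1 = 0 := by simp [logDivSelf]

lemma two_mul_logDivSelf_two_mul (k : ℕ) : 2 * logDivSelf (2 * k) = log 2 / k + logDivSelf k := by
  rcases eq_or_ne k 0 with rfl | hk
  · simp [logDivSelf]
  have hk' : (k : ℝ) ≠ 0 := by exact_mod_cast hk
  simp only [logDivSelf, Nat.cast_mul, Nat.cast_ofNat, log_mul two_ne_zero hk']
  field_simp

lemma two_mul_sum_logDivSelf_even (N : ℕ) :
    2 * ∑ k ∈ range N, logDivSelf (2 * k + 2) =
      log 2 * harmonic N + ∑ k ∈ range N, logDivSelf (k + 1) := by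
  simp only [harmonic, Rat.cast_sum, Rat.cast_inv, Rat.cast_natCast, mul_sum, ← sum_add_distrib]
  refine sum_congr rfl fun k _ => ?_
  rw [← mul_add_one, two_mul_logDivSelf_two_mul, div_eq_mul_inv]

lemma tendsto_logDivSelf_atTop : Tendsto logDivSelf atTop (nhds 0) :=
  isLittleO_log_id_atTop.tendsto_div_nhds_zero.comp tendsto_natCast_atTop_atTop

lemma integral_log_div_self {a b : ℝ} (ha : 0 < a) (hb : 0 < b) :
    ∫ x in a..b, log x / x = (log b ^ 2 - log a ^ 2) / 2 := by
  have hpos : ∀ x ∈ Set.uIcc a b, 0 < x := fun x hx =>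
    lt_of_lt_of_le (lt_min ha hb) hx.1
  have hderiv : ∀ x ∈ Set.uIcc a b, HasDerivAt (fun y => log y ^ 2 / 2) (log x / x) x := by
    intro x hx
    refine (((hasDerivAt_log (hpos x hx).ne').pow 2).div_const 2).congr_deriv ?_
    field_simp
    norm_num
  rw [intervalIntegral.integral_eq_sub_of_hasDerivAt hderiv, sub_div]
  refine (ContinuousOn.div ?_ continuousOn_id fun x hx => (hpos x hx).ne').intervalIntegrable
  exact continuousOn_log.mono fun x hx => (hpos x hx).ne'

lemma sum_Ico_logDivSelf_sub_mem_Icc {N : ℕ} (hN : 3 ≤ N) :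
    ∑ k ∈ Ico N (2 * N), logDivSelf (k + 1) - log 2 * log N ∈
      Set.Icc (log 2 ^ 2 / 2 - (logDivSelf N - logDivSelf (2 * N))) (log 2 ^ 2 / 2) := by
  have hN3 : (3 : ℝ) ≤ N := by exact_mod_cast hN
  have hN0 : (0 : ℝ) < N := by linarith
  have he : exp 1 ≤ N := by linarith [exp_one_lt_d9]
  have hanti : AntitoneOn (fun x : ℝ => log x / x) (Set.Icc (N : ℝ) ((2 * N : ℕ) : ℝ)) :=
    log_div_self_antitoneOn.mono fun x hx => he.trans hx.1
  have hint : ∫ x in (N : ℝ)..((2 * N : ℕ) : ℝ), log x / x = log 2 * log N + log 2 ^ 2 / 2 := by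
    rw [integral_log_div_self hN0 (by positivity), Nat.cast_mul, Nat.cast_ofNat,
      log_mul two_ne_zero hN0.ne']
    ring
  have hupper : ∑ k ∈ Ico N (2 * N), logDivSelf (k + 1) ≤ _ :=
    hanti.sum_le_integral_Ico (by omega)
  have hlower : _ ≤ ∑ k ∈ Ico N (2 * N), logDivSelf k :=
    hanti.integral_le_sum_Ico (by omega)
  have htel : ∑ k ∈ Ico N (2 * N), (logDivSelf (k + 1) - logDivSelf k) =
      logDivSelf (2 * N) - logDivSelf N :=
    sum_Ico_sub logDivSelf (by omega)
  rw [hint] at hupper hlower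
  rw [sum_sub_distrib] at htel
  constructor <;> linarith

lemma tendsto_sum_Ico_logDivSelf_sub :
    Tendsto (fun N : ℕ => ∑ k ∈ Ico N (2 * N), logDivSelf (k + 1) - log 2 * log N) atTop
      (nhds (log 2 ^ 2 / 2)) := by
  have hdouble : Tendsto (fun N : ℕ => logDivSelf (2 * N)) atTop (nhds 0) :=
    tendsto_logDivSelf_atTop.comp
      (tendsto_atTop_mono (fun N => (by omega : N ≤ 2 * N)) tendsto_id)
  refine tendsto_of_tendsto_of_tendsto_of_le_of_le' ?_ tendsto_const_nhds
    (eventually_atTop.2 ⟨3, fun N hN => (sum_Ico_logDivSelf_sub_mem_Icc hN).1⟩)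
    (eventually_atTop.2 ⟨3, fun N hN => (sum_Ico_logDivSelf_sub_mem_Icc hN).2⟩)
  simpa using tendsto_const_nhds.sub (tendsto_logDivSelf_atTop.sub hdouble)

lemma tendsto_sum_two_mul_logDivSelf_sub_neighbours :
    Tendsto (fun N => ∑ n ∈ range N,
        (2 * logDivSelf (2 * n + 2) - logDivSelf (2 * n + 1) - logDivSelf (2 * n + 3))) atTop
      (nhds ((2 * eulerMascheroniConstant - log 2) * log 2)) := by
  have hodd : Tendsto (fun N : ℕ => logDivSelf (2 * N + 1)) atTop (nhds 0) :=
    tendsto_logDivSelf_atTop.comp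
      (tendsto_atTop_mono (fun N => (by omega : N ≤ 2 * N + 1)) tendsto_id)
  have hlim := ((tendsto_harmonic_sub_log.const_mul (2 * log 2)).sub
    (tendsto_sum_Ico_logDivSelf_sub.const_mul 2)).sub hodd
  convert hlim using 1
  · funext N
    rw [sum_range_two_mul_sub_neighbours, logDivSelf_one, show (4 : ℝ) = 2 * 2 by norm_num,
      mul_assoc, two_mul_sum_logDivSelf_even,
      sum_Ico_eq_sub _ (by omega : N ≤ 2 * N)]
    ring
  · congr 1
    ring

/-- The infinite product
`∏_{n=1}^∞ (2n)^{1/(2n)} (2n)^{1/(2n)} / ((2n-1)^{1/(2n-1)} (2n+1)^{1/(2n+1)})`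
converges to `2^{2γ - ln 2}`, where `γ` is the Euler–Mascheroni constant. -/
theorem wallis_like_product_eta_one :
    Tendsto (fun N => ∏ n ∈ Finset.range N,
        ((2 * (n + 1 : ℕ) : ℝ) ^ (1 / (2 * (n + 1 : ℕ) : ℝ)) *
          (2 * (n + 1 : ℕ) : ℝ) ^ (1 / (2 * (n + 1 : ℕ) : ℝ)) /
            ((2 * (n + 1 : ℕ) - 1 : ℝ) ^ (1 / (2 * (n + 1 : ℕ) - 1 : ℝ)) *
              (2 * (n + 1 : ℕ) + 1 : ℝ) ^ (1 / (2 * (n + 1 : ℕ) + 1 : ℝ)))))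
      atTop
      (nhds ((2 : ℝ) ^ (2 * Real.eulerMascheroniConstant - Real.log 2))) := by
  rw [rpow_def_of_pos two_pos, mul_comm]
  refine ((continuous_exp.tendsto _).comp tendsto_sum_two_mul_logDivSelf_sub_neighbours).congr
    fun N => ?_
  rw [Function.comp_apply, exp_sum]
  refine prod_congr rfl fun n _ => ?_
  have hx : ((2 * n + 2 : ℕ) : ℝ) = 2 * (n + 1 : ℕ) := by push_cast; ring
  have hx₁ : ((2 * n + 1 : ℕ) : ℝ) = 2 * (n + 1 : ℕ) - 1 := by push_cast; ring
  have hx₃ : ((2 * n + 3 : ℕ) : ℝ) = 2 * (n + 1 : ℕ) + 1 := by push_cast; ring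
  have hpos : (0 : ℝ) < 2 * (n + 1 : ℕ) - 1 := by push_cast; linarith [n.cast_nonneg (α := ℝ)]
  rw [logDivSelf, logDivSelf, logDivSelf, hx, hx₁, hx₃, rpow_one_div_self_eq_exp hpos,
    rpow_one_div_self_eq_exp (by positivity), rpow_one_div_self_eq_exp (by positivity),
    exp_sub, exp_sub, two_mul, exp_add, div_div]
end
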